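/- arXiv:2004.05961 — 5 statements merged into one kernel-verified Lean document; each statement's English description precedes it below -/
import Mathlib

section
/- For any input port i and any time t, the sum over all released coflows k and all output ports j of the BlindFlow rates r_{ijk}(t) = w_k·1_{ijk}^t / (Σ_{l,u} (w_l/c^op_j)·1_{ujl}^t + Σ_{l,v} (w_l/c^ip_i)·1_{ivl}^t) is at most the input port capacity c^ip_i. -/
open Finset

/-- The BlindFlow rate allocation respects every input port capacity. -/
theorem blindflow_input_port_feasible
    (m n : ℕ) (cin cout : Fin m → ℝ) (w : Fin n → ℝ)
    (Q : Finset (Fin n)) (ind : Fin m → Fin m → Fin n → ℝ)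
    (r : Fin m → Fin m → Fin n → ℝ)
    (hcin : ∀ i, 0 < cin i) (hcout : ∀ j, 0 < cout j)
    (hw : ∀ k, 0 < w k)
    (hind : ∀ i j k, ind i j k = 0 ∨ ind i j k = 1)
    (hr : ∀ i j k, r i j k =
      if (∑ l ∈ Q, ∑ u, (w l / cout j) * ind u j l)
          + (∑ l ∈ Q, ∑ v, (w l / cin i) * ind i v l) = 0 then 0
      else w k * ind i j k /
        ((∑ l ∈ Q, ∑ u, (w l / cout j) * ind u j l)
          + (∑ l ∈ Q, ∑ v, (w l / cin i) * ind i v l)))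
    (i : Fin m) :
    ∑ k ∈ Q, ∑ j, r i j k ≤ cin i := by
  have hindnn : ∀ a b c, (0:ℝ) ≤ ind a b c := by
    intro a b c; rcases hind a b c with h | h <;> rw [h] <;> norm_num
  set S : ℝ := ∑ l ∈ Q, ∑ v, (w l / cin i) * ind i v l with hSdef
  have hSnn : 0 ≤ S := by
    apply Finset.sum_nonneg; intro l _
    apply Finset.sum_nonneg; intro v _
    exact mul_nonneg (div_nonneg (hw l).le (hcin i).le) (hindnn _ _ _)
  have hTnn : ∀ j, (0:ℝ) ≤ ∑ l ∈ Q, ∑ u, (w l / cout j) * ind u j l := by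
    intro j
    apply Finset.sum_nonneg; intro l _
    apply Finset.sum_nonneg; intro u _
    exact mul_nonneg (div_nonneg (hw l).le (hcout j).le) (hindnn _ _ _)
  rcases eq_or_lt_of_le hSnn with hS0 | hSpos
  · -- S = 0 ⇒ all ind i v l = 0 for l ∈ Q ⇒ all rates 0
    have hzero : ∀ l ∈ Q, ∀ v : Fin m, ind i v l = 0 := by
      intro l hl v
      have h1 : ∀ l ∈ Q, (0:ℝ) ≤ ∑ v, (w l / cin i) * ind i v l := by
        intro l _
        apply Finset.sum_nonneg; intro v _
        exact mul_nonneg (div_nonneg (hw l).le (hcin i).le) (hindnn _ _ _)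
      have h2 := (Finset.sum_eq_zero_iff_of_nonneg h1).mp hS0.symm l hl
      have h3 : ∀ v ∈ (Finset.univ : Finset (Fin m)), (0:ℝ) ≤ (w l / cin i) * ind i v l := by
        intro v _
        exact mul_nonneg (div_nonneg (hw l).le (hcin i).le) (hindnn _ _ _)
      have h4 := (Finset.sum_eq_zero_iff_of_nonneg h3).mp h2 v (Finset.mem_univ v)
      have hwc : w l / cin i ≠ 0 := ne_of_gt (div_pos (hw l) (hcin i))
      exact (mul_eq_zero.mp h4).resolve_left hwc
    have : ∑ k ∈ Q, ∑ j, r i j k = 0 := by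
      apply Finset.sum_eq_zero; intro k hk
      apply Finset.sum_eq_zero; intro j _
      rw [hr i j k]
      split
      · rfl
      · rw [hzero k hk j]; ring
    rw [this]; exact (hcin i).le
  · -- S > 0
    have key : ∀ k ∈ Q, ∀ j : Fin m, r i j k ≤ w k * ind i j k / S := by
      intro k _ j
      rw [hr i j k]
      have hD : 0 < (∑ l ∈ Q, ∑ u, (w l / cout j) * ind u j l) + S :=
        add_pos_of_nonneg_of_pos (hTnn j) hSpos
      rw [if_neg hD.ne']
      gcongr
      · exact mul_nonneg (hw k).le (hindnn _ _ _)
      · linarith [hTnn j]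
    calc ∑ k ∈ Q, ∑ j, r i j k
        ≤ ∑ k ∈ Q, ∑ j, w k * ind i j k / S := by
          apply Finset.sum_le_sum; intro k hk
          exact Finset.sum_le_sum fun j _ => key k hk j
      _ = (∑ k ∈ Q, ∑ j, w k * ind i j k) / S := by
          rw [Finset.sum_div]
          exact Finset.sum_congr rfl fun k _ => (Finset.sum_div _ _ _).symm
      _ = cin i * S / S := by
          congr 1
          rw [hSdef, Finset.mul_sum]
          refine Finset.sum_congr rfl fun k _ => ?_
          rw [Finset.mul_sum]
          refine Finset.sum_congr rfl fun j _ => ?_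
          field_simp
          rw [eq_div_iff (hcin i).ne']
      _ = cin i := by field_simp
end

section
/- For any output port j and any time t, the sum over all released coflows k and all input ports i of the BlindFlow rates r_{ijk}(t) is at most the output port capacity c^op_j. -/
open Finset

/-- The BlindFlow rate allocation respects every output port capacity. -/
theorem blindflow_output_port_feasible
    (m n : ℕ) (cin cout : Fin m → ℝ) (w : Fin n → ℝ)
    (Q : Finset (Fin n)) (ind : Fin m → Fin m → Fin n → ℝ)
    (r : Fin m → Fin m → Fin n → ℝ)
    (hcin : ∀ i, 0 < cin i) (hcout : ∀ j, 0 < cout j)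
    (hw : ∀ k, 0 < w k)
    (hind : ∀ i j k, ind i j k = 0 ∨ ind i j k = 1)
    (hr : ∀ i j k, r i j k =
      if (∑ l ∈ Q, ∑ u, (w l / cout j) * ind u j l)
          + (∑ l ∈ Q, ∑ v, (w l / cin i) * ind i v l) = 0 then 0
      else w k * ind i j k /
        ((∑ l ∈ Q, ∑ u, (w l / cout j) * ind u j l)
          + (∑ l ∈ Q, ∑ v, (w l / cin i) * ind i v l)))
    (j : Fin m) :
    ∑ k ∈ Q, ∑ i, r i j k ≤ cout j := by
  set S := ∑ k ∈ Q, ∑ i, w k * ind i j k with hSdef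
  have hindnn : ∀ i j' k, (0:ℝ) ≤ ind i j' k := by
    intro i j' k; rcases hind i j' k with h | h <;> simp [h]
  have hterm : ∀ k i, 0 ≤ w k * ind i j k :=
    fun k i => mul_nonneg (hw k).le (hindnn i j k)
  have hS0 : 0 ≤ S :=
    Finset.sum_nonneg fun k _ => Finset.sum_nonneg fun i _ => hterm k i
  have hA : (∑ l ∈ Q, ∑ u, (w l / cout j) * ind u j l) = S / cout j := by
    rw [hSdef, Finset.sum_div]
    refine Finset.sum_congr rfl fun l _ => ?_
    rw [Finset.sum_div]
    exact Finset.sum_congr rfl fun u _ => by ring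
  have hB : ∀ i, 0 ≤ ∑ l ∈ Q, ∑ v, (w l / cin i) * ind i v l := by
    intro i
    refine Finset.sum_nonneg fun l _ => Finset.sum_nonneg fun v _ => ?_
    exact mul_nonneg (div_nonneg (hw l).le (hcin i).le) (hindnn i v l)
  rcases eq_or_lt_of_le hS0 with hS | hS
  · -- S = 0, so all ind terms vanish
    have hz : ∀ k ∈ Q, ∀ i, w k * ind i j k = 0 := by
      intro k hk i
      have h1 : ∑ k ∈ Q, ∑ i, w k * ind i j k = 0 := hS.symm
      have h2 := (Finset.sum_eq_zero_iff_of_nonneg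
        (fun k _ => Finset.sum_nonneg fun i _ => hterm k i)).mp h1 k hk
      exact (Finset.sum_eq_zero_iff_of_nonneg (fun i _ => hterm k i)).mp h2 i
        (Finset.mem_univ i)
    have : ∀ k ∈ Q, ∀ i : Fin m, r i j k = 0 := by
      intro k hk i
      rw [hr]
      split <;> simp [hz k hk i]
    calc ∑ k ∈ Q, ∑ i, r i j k = 0 := by
          refine Finset.sum_eq_zero fun k hk => Finset.sum_eq_zero fun i _ => this k hk i
      _ ≤ cout j := (hcout j).le
  · -- S > 0
    have hApos : 0 < S / cout j := div_pos hS (hcout j)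
    have key : ∀ k ∈ Q, ∀ i : Fin m, r i j k ≤ (w k * ind i j k) * (cout j / S) := by
      intro k hk i
      have hden : 0 < (∑ l ∈ Q, ∑ u, (w l / cout j) * ind u j l)
          + (∑ l ∈ Q, ∑ v, (w l / cin i) * ind i v l) := by
        rw [hA]; exact add_pos_of_pos_of_nonneg hApos (hB i)
      rw [hr, if_neg hden.ne']
      have h1 : w k * ind i j k /
          ((∑ l ∈ Q, ∑ u, (w l / cout j) * ind u j l)
            + (∑ l ∈ Q, ∑ v, (w l / cin i) * ind i v l))
          ≤ w k * ind i j k / (S / cout j) := by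
        gcongr
        · exact hterm k i
        · rw [hA]; exact le_add_of_nonneg_right (hB i)
      refine h1.trans_eq ?_
      rw [div_div_eq_mul_div, mul_div_assoc]
    calc ∑ k ∈ Q, ∑ i, r i j k
        ≤ ∑ k ∈ Q, ∑ i, (w k * ind i j k) * (cout j / S) := by
          refine Finset.sum_le_sum fun k hk => Finset.sum_le_sum fun i _ => key k hk i
      _ = S * (cout j / S) := by
          rw [hSdef, Finset.sum_mul]
          exact Finset.sum_congr rfl fun k _ => (Finset.sum_mul _ _ _).symm
      _ = cout j := by field_simp
end

section
/- With dual variables set from the augmented-switch run as α_k = Σ_t w_k·1_k^t, θ_{it} = (1/(4 c^ip_i)) Σ_{j,k} (w_k/n_{kt})·1_{ijk}^t, and φ_{jt} = (1/(4 c^op_j)) Σ_{i,k} (w_k/n_{kt})·1_{ijk}^t, the dual objective Σ_k α_k − Σ_{j,t} c^op_j·φ_{jt} − Σ_{i,t} c^ip_i·θ_{it} equals exactly one half of the weighted completion time J_aug = Σ_t Σ_k w_k·1_k^t. -/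
open Finset

/-- With the dual variables defined from the augmented-switch run, the dual
objective equals exactly one half of the weighted completion time
`J_aug = ∑ t ∑ k w k · 1_k^t`. -/
theorem dual_objective_eq_half_Jaug
    (m n Tmax : ℕ)
    (cin cout : Fin m → ℝ) (w : Fin n → ℝ)
    (ind : Fin m → Fin m → Fin n → ℕ → ℝ)
    (indk : Fin n → ℕ → ℝ) (nn : Fin n → ℕ → ℝ)
    (α : Fin n → ℝ) (φ θ : Fin m → ℕ → ℝ)
    (hcin : ∀ i, 0 < cin i) (hcout : ∀ j, 0 < cout j)
    (hw : ∀ k, 0 < w k)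
    (hind : ∀ i j k t, ind i j k t = 0 ∨ ind i j k t = 1)
    -- `1_k^t` is 1 iff some flow of coflow `k` is unfinished at `t`
    (hindk1 : ∀ k t, (∃ i j, ind i j k t = 1) → indk k t = 1)
    (hindk0 : ∀ k t, (∀ i j, ind i j k t = 0) → indk k t = 0)
    -- `n_{kt}` is positive and equals the number of unfinished flows when `1_k^t = 1`
    (hnn_pos : ∀ k t, 0 < nn k t)
    (hnn : ∀ k t, indk k t = 1 → nn k t = ∑ i, ∑ j, ind i j k t)
    -- definitions of the dual variables
    (hα : ∀ k, α k = ∑ t ∈ Finset.range Tmax, w k * indk k t)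
    (hθ : ∀ i t, θ i t = (1 / (4 * cin i)) * ∑ j, ∑ k, (w k / nn k t) * ind i j k t)
    (hφ : ∀ j t, φ j t = (1 / (4 * cout j)) * ∑ i, ∑ k, (w k / nn k t) * ind i j k t) :
    ∑ k, α k - (∑ j, ∑ t ∈ Finset.range Tmax, cout j * φ j t)
      - (∑ i, ∑ t ∈ Finset.range Tmax, cin i * θ i t) =
      (1 / 2) * ∑ t ∈ Finset.range Tmax, ∑ k, w k * indk k t := by
  have key : ∀ k t, (w k / nn k t) * (∑ i, ∑ j, ind i j k t) = w k * indk k t := by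
    intro k t
    by_cases h : ∃ i j, ind i j k t = 1
    · have h1 := hindk1 k t h
      rw [h1, ← hnn k t h1, div_mul_cancel₀ _ (ne_of_gt (hnn_pos k t)), mul_one]
    · have hz : ∀ i j, ind i j k t = 0 := by
        intro i j
        rcases hind i j k t with h0 | h1
        · exact h0
        · exact absurd ⟨i, j, h1⟩ h
      rw [hindk0 k t hz]
      simp [hz]
  have quarter : ∀ t, ∀ i : Fin m, ∑ j, ∑ k, (w k / nn k t) * ind i j k t
      = ∑ k, (w k / nn k t) * ∑ j, ind i j k t := by
    intro t i
    rw [Finset.sum_comm]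
    exact Finset.sum_congr rfl fun k _ => (Finset.mul_sum _ _ _).symm
  have hθsum : ∑ i, ∑ t ∈ Finset.range Tmax, cin i * θ i t
      = (1/4) * ∑ t ∈ Finset.range Tmax, ∑ k, w k * indk k t := by
    rw [Finset.sum_comm, Finset.mul_sum]
    refine Finset.sum_congr rfl fun t _ => ?_
    have : ∑ i, cin i * θ i t = (1/4) * ∑ i, ∑ j, ∑ k, (w k / nn k t) * ind i j k t := by
      rw [Finset.mul_sum]
      refine Finset.sum_congr rfl fun i _ => ?_
      rw [hθ, ← mul_assoc]
      congr 1
      have h0 := (hcin i).ne'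
      field_simp
    rw [this]
    congr 1
    calc ∑ i, ∑ j, ∑ k, (w k / nn k t) * ind i j k t
        = ∑ i : Fin m, ∑ k, (w k / nn k t) * ∑ j, ind i j k t :=
          Finset.sum_congr rfl fun i _ => quarter t i
      _ = ∑ k, (w k / nn k t) * ∑ i, ∑ j, ind i j k t := by
          rw [Finset.sum_comm]
          exact Finset.sum_congr rfl fun k _ => (Finset.mul_sum _ _ _).symm
      _ = ∑ k, w k * indk k t := Finset.sum_congr rfl fun k _ => key k t
  have hφsum : ∑ j, ∑ t ∈ Finset.range Tmax, cout j * φ j t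
      = (1/4) * ∑ t ∈ Finset.range Tmax, ∑ k, w k * indk k t := by
    rw [Finset.sum_comm, Finset.mul_sum]
    refine Finset.sum_congr rfl fun t _ => ?_
    have : ∑ j, cout j * φ j t = (1/4) * ∑ j, ∑ i, ∑ k, (w k / nn k t) * ind i j k t := by
      rw [Finset.mul_sum]
      refine Finset.sum_congr rfl fun j _ => ?_
      rw [hφ, ← mul_assoc]
      congr 1
      have h0 := (hcout j).ne'
      field_simp
    rw [this]
    congr 1
    calc ∑ j : Fin m, ∑ i, ∑ k, (w k / nn k t) * ind i j k t
        = ∑ i, ∑ j, ∑ k, (w k / nn k t) * ind i j k t := Finset.sum_comm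
      _ = ∑ i : Fin m, ∑ k, (w k / nn k t) * ∑ j, ind i j k t :=
          Finset.sum_congr rfl fun i _ => quarter t i
      _ = ∑ k, (w k / nn k t) * ∑ i, ∑ j, ind i j k t := by
          rw [Finset.sum_comm]
          exact Finset.sum_congr rfl fun k _ => (Finset.mul_sum _ _ _).symm
      _ = ∑ k, w k * indk k t := Finset.sum_congr rfl fun k _ => key k t
  have hαsum : ∑ k, α k = ∑ t ∈ Finset.range Tmax, ∑ k, w k * indk k t := by
    rw [Finset.sum_comm]
    exact Finset.sum_congr rfl fun k _ => hα k
  rw [hαsum, hθsum, hφsum]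
  ring
end

section
/- The dual constraint α_k ≤ t·w_k + Σ_{i,j} Σ_{s≥t} γ_{ijks} holds for all coflows k and times t ≥ R_k when the dual variables are defined as α_k = Σ_s w_k·1_k^s and γ_{ijks} = (w_k/n_{ks})·1_{ijk}^s. -/
open Finset

/-- The first dual constraint `α_k ≤ t·w_k + ∑_{i,j} ∑_{s≥t} γ_{ijks}` holds
for the dual variables `α_k = ∑_s w_k·1_k^s` and
`γ_{ijks} = (w_k/n_{ks})·1_{ijk}^s`. -/
theorem dual_constraint_alpha
    (m n Tmax : ℕ)
    (w : Fin n → ℝ) (R : Fin n → ℕ)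
    (ind : Fin m → Fin m → Fin n → ℕ → ℝ)
    (indk : Fin n → ℕ → ℝ) (nn : Fin n → ℕ → ℝ)
    (α : Fin n → ℝ) (γ : Fin m → Fin m → Fin n → ℕ → ℝ)
    (hw : ∀ k, 0 < w k)
    (hind : ∀ i j k s, ind i j k s = 0 ∨ ind i j k s = 1)
    (hindk01 : ∀ k s, indk k s = 0 ∨ indk k s = 1)
    (hindk0 : ∀ k s, indk k s = 0 → ∀ i j, ind i j k s = 0)
    (hnn_pos : ∀ k s, 0 < nn k s)
    (hnn : ∀ k s, indk k s = 1 → nn k s = ∑ i, ∑ j, ind i j k s)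
    (hα : ∀ k, α k = ∑ s ∈ Finset.range Tmax, w k * indk k s)
    (hγ : ∀ i j k s, γ i j k s = (w k / nn k s) * ind i j k s) :
    ∀ (k : Fin n) (t : ℕ), R k ≤ t →
      α k ≤ (t : ℝ) * w k + ∑ i, ∑ j, ∑ s ∈ Finset.Ico t Tmax, γ i j k s := by
  intro k t ht
  have key : ∀ s, ∑ i, ∑ j, γ i j k s = w k * indk k s := by
    intro s
    rcases hindk01 k s with h0 | h1
    · rw [h0, mul_zero]
      apply Finset.sum_eq_zero
      intro i _
      apply Finset.sum_eq_zero
      intro j _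
      rw [hγ, hindk0 k s h0 i j, mul_zero]
    · have hnn' := hnn k s h1
      have hne : nn k s ≠ 0 := ne_of_gt (hnn_pos k s)
      rw [h1, mul_one]
      have : ∑ i, ∑ j, γ i j k s = (w k / nn k s) * ∑ i, ∑ j, ind i j k s := by
        rw [Finset.mul_sum]
        refine Finset.sum_congr rfl fun i _ => ?_
        rw [Finset.mul_sum]
        exact Finset.sum_congr rfl fun j _ => hγ i j k s
      rw [this, ← hnn', div_mul_cancel₀ _ hne]
  have hswap : ∑ i, ∑ j, ∑ s ∈ Finset.Ico t Tmax, γ i j k s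
      = ∑ s ∈ Finset.Ico t Tmax, w k * indk k s := by
    have h1 : ∀ i : Fin m, ∑ j, ∑ s ∈ Finset.Ico t Tmax, γ i j k s
        = ∑ s ∈ Finset.Ico t Tmax, ∑ j, γ i j k s := fun i => Finset.sum_comm
    rw [Finset.sum_congr rfl (fun i _ => h1 i), Finset.sum_comm]
    exact Finset.sum_congr rfl fun s _ => key s
  rw [hα, hswap]
  have hf0 : ∀ s, 0 ≤ w k * indk k s := by
    intro s
    rcases hindk01 k s with h | h <;> rw [h] <;> simp [le_of_lt (hw k)]
  have hsub : Finset.range Tmax ⊆ Finset.range t ∪ Finset.Ico t Tmax := by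
    intro x hx
    simp only [Finset.mem_range] at hx
    simp only [Finset.mem_union, Finset.mem_range, Finset.mem_Ico]
    omega
  calc ∑ s ∈ Finset.range Tmax, w k * indk k s
      ≤ ∑ s ∈ Finset.range t ∪ Finset.Ico t Tmax, w k * indk k s :=
        Finset.sum_le_sum_of_subset_of_nonneg hsub (fun s _ _ => hf0 s)
    _ = ∑ s ∈ Finset.range t, w k * indk k s
        + ∑ s ∈ Finset.Ico t Tmax, w k * indk k s := by
        apply Finset.sum_union
        rw [Finset.disjoint_left]
        intro a ha hb
        simp only [Finset.mem_range] at ha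
        simp only [Finset.mem_Ico] at hb
        omega
    _ ≤ (t : ℝ) * w k + ∑ s ∈ Finset.Ico t Tmax, w k * indk k s := by
        gcongr
        calc ∑ s ∈ Finset.range t, w k * indk k s
            ≤ ∑ s ∈ Finset.range t, w k := by
              apply Finset.sum_le_sum
              intro s _
              rcases hindk01 k s with h | h <;> rw [h] <;> simp [le_of_lt (hw k)]
          _ = (t : ℝ) * w k := by
              rw [Finset.sum_const, Finset.card_range, nsmul_eq_mul]
end

section
/- Key bounding chain for the dual constraint: if 1_{ijk}^t = 1 and Σ_{s≥t} 1_{ijk}^s ≤ d_{ijk}/r^aug_{ijk}(t), where r^aug_{ijk}(t) = 4p·w_k / D with D = Σ_{l,u} (w_l/c^op_j)·1_{ujl}^t + Σ_{l,v} (w_l/c^ip_i)·1_{ivl}^t > 0, and n_{ks} ≥ 1 whenever 1_{ijk}^s = 1, and n_{lt} ≤ p for all l, then Σ_{s≥t} (w_k/n_{ks})·1_{ijk}^s / d_{ijk} ≤ Σ_{l,u} (w_l/(4 c^op_j n_{lt}))·1_{ujl}^t + Σ_{l,v} (w_l/(4 c^ip_i n_{lt}))·1_{ivl}^t. -/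
open Finset

/-- Key bounding chain for the second dual constraint: from the remaining-time
bound `∑_{s≥t} 1_{ijk}^s ≤ d_{ijk}/r^aug_{ijk}(t)` and the bounds
`1 ≤ n_{ks}` (on unfinished slots) and `n_{lt} ≤ p`, one gets
`∑_{s≥t} (w_k/n_{ks})·1_{ijk}^s / d_{ijk} ≤ φ_{jt} + θ_{it}` written out
explicitly. -/
theorem dual_constraint_bounding_chain
    (m n Tmax : ℕ) (p : ℕ) (i j : Fin m) (k : Fin n) (t : ℕ)
    (cin cout : Fin m → ℝ) (w : Fin n → ℝ)
    (d : ℝ) (D : ℝ)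
    (ind : Fin m → Fin m → Fin n → ℕ → ℝ)
    (nn : Fin n → ℕ → ℝ)
    (hcin : ∀ i, 0 < cin i) (hcout : ∀ j, 0 < cout j)
    (hw : ∀ l, 0 < w l) (hd : 0 < d) (hp : 1 ≤ p)
    (hind01 : ∀ u v l s, ind u v l s = 0 ∨ ind u v l s = 1)
    (hnn_pos : ∀ l s, 0 < nn l s)
    (hD : D = (∑ l, ∑ u, (w l / cout j) * ind u j l t)
              + (∑ l, ∑ v, (w l / cin i) * ind i v l t))
    (hDpos : 0 < D)
    (hit : ind i j k t = 1)
    (hrem : ∑ s ∈ Finset.Ico t Tmax, ind i j k s ≤ d / (4 * (p : ℝ) * w k / D))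
    (hnn_ge1 : ∀ s, ind i j k s = 1 → 1 ≤ nn k s)
    (hnn_le_p : ∀ l, nn l t ≤ (p : ℝ)) :
    ∑ s ∈ Finset.Ico t Tmax, (w k / nn k s) * ind i j k s / d ≤
      (∑ l, ∑ u, (w l / (4 * cout j * nn l t)) * ind u j l t)
        + (∑ l, ∑ v, (w l / (4 * cin i * nn l t)) * ind i v l t) := by
  have hpR : (0:ℝ) < p := by exact_mod_cast Nat.lt_of_lt_of_le Nat.zero_lt_one hp
  have hwk := hw k
  -- Step 1: LHS ≤ D / (4p)
  have h1 : ∑ s ∈ Finset.Ico t Tmax, (w k / nn k s) * ind i j k s / d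
      ≤ D / (4 * (p:ℝ)) := by
    have hterm : ∀ s ∈ Finset.Ico t Tmax,
        (w k / nn k s) * ind i j k s / d ≤ w k * ind i j k s / d := by
      intro s _
      rcases hind01 i j k s with h | h
      · simp [h]
      · have h1le := hnn_ge1 s h
        have := hnn_pos k s
        rw [h, mul_one, mul_one]
        have hle : w k / nn k s ≤ w k := by
          rw [div_le_iff₀ this]; nlinarith
        gcongr
    calc ∑ s ∈ Finset.Ico t Tmax, (w k / nn k s) * ind i j k s / d
        ≤ ∑ s ∈ Finset.Ico t Tmax, w k * ind i j k s / d :=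
          Finset.sum_le_sum hterm
      _ = w k * (∑ s ∈ Finset.Ico t Tmax, ind i j k s) / d := by
          rw [Finset.mul_sum, Finset.sum_div]
      _ ≤ w k * (d / (4 * (p:ℝ) * w k / D)) / d := by gcongr
      _ = D / (4 * (p:ℝ)) := by
          field_simp
  refine h1.trans ?_
  -- Step 2: D / (4p) ≤ RHS
  have hterm2 : ∀ (c : ℝ), 0 < c → ∀ (l : Fin n) (x : ℝ), (x = 0 ∨ x = 1) →
      (w l / c) * x / (4 * (p:ℝ)) ≤ (w l / (4 * c * nn l t)) * x := by
    intro c hc l x hx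
    rcases hx with h | h
    · simp [h]
    · rw [h, mul_one, mul_one]
      have hnp := hnn_pos l t
      have hnlp := hnn_le_p l
      have h1 : (w l / c) / (4 * (p:ℝ)) = w l / (4 * c * (p:ℝ)) := by
        rw [div_div]; ring_nf
      rw [h1]
      gcongr
      all_goals first | exact (hw l).le | exact Or.inl trivial | exact hnlp
  rw [hD, add_div, Finset.sum_div, Finset.sum_div]
  refine add_le_add ?_ ?_
  · refine Finset.sum_le_sum fun l _ => ?_
    rw [Finset.sum_div]
    exact Finset.sum_le_sum fun u _ =>
      hterm2 (cout j) (hcout j) l _ (hind01 u j l t)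
  · refine Finset.sum_le_sum fun l _ => ?_
    rw [Finset.sum_div]
    exact Finset.sum_le_sum fun v _ =>
      hterm2 (cin i) (hcin i) l _ (hind01 i v l t)
end
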